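/- If chord diagrams D and D' are related by a finite sequence of moves, each of which is a first move or a strong third move (each applied in either direction), then D contains an H-configuration if and only if D' contains an H-configuration. (Chord-diagram form of Lemma 2: the indicator H of the presence of an H chord is a strong (1,3) homotopy invariant.) -/
import Mathlib


open scoped Classical

/-- Two chords of a chord diagram on the points `0 < 1 < ⋯ < N-1` (in this cyclic
order) cross if their endpoints interleave. -/
def Crosses {N : ℕ} (c d : Sym2 (Fin N)) : Prop :=
  ∃ a b x y : Fin N, a < x ∧ x < b ∧ b < y ∧
    ((c = s(a, b) ∧ d = s(x, y)) ∨ (c = s(x, y) ∧ d = s(a, b)))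

/-- A chord diagram of order `n`: a partition of the `2n` points `0, 1, …, 2n-1`
(in this cyclic order on a circle) into `n` unordered pairs, the chords. -/
structure ChordDiagram (n : ℕ) where
  chords : Finset (Sym2 (Fin (2 * n)))
  not_diag : ∀ c ∈ chords, ¬ c.IsDiag
  cover : ∀ x : Fin (2 * n), ∃! c, c ∈ chords ∧ x ∈ c

/-- The trivializing number: the minimum number of chords whose deletion yields a
trivial chord diagram (one with no two crossing chords). -/
noncomputable def tr {n : ℕ} (D : ChordDiagram n) : ℕ :=
  sInf {k | ∃ S ⊆ D.chords, S.card = k ∧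
    ∀ c ∈ D.chords \ S, ∀ d ∈ D.chords \ S, ¬ Crosses c d}

/-- The cross chord number: the number of unordered pairs of chords that cross. -/
noncomputable def Xnum {n : ℕ} (D : ChordDiagram n) : ℕ :=
  ((D.chords ×ˢ D.chords).filter fun p => Crosses p.1 p.2).card / 2

/-- Two points are cyclically adjacent on the circle `0, 1, …, N-1`. -/
def Adjacent {N : ℕ} (p q : Fin N) : Prop :=
  (p.val + 1) % N = q.val ∨ (q.val + 1) % N = p.val

/-- The ternary cyclic-order relation on the points `0, 1, …, N-1`. -/
def CyclicBtw {N : ℕ} (a b c : Fin N) : Prop :=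
  (a < b ∧ b < c) ∨ (b < c ∧ c < a) ∨ (c < a ∧ a < b)

/-- A first move (first flat Reidemeister move): `D'` is obtained from `D` by
adding an isolated chord. -/
def FirstMove {n : ℕ} (D : ChordDiagram n) (D' : ChordDiagram (n + 1)) : Prop :=
  ∃ ι : Fin (2 * n) → Fin (2 * (n + 1)),
    Function.Injective ι ∧
    (∀ a b c, CyclicBtw a b c → CyclicBtw (ι a) (ι b) (ι c)) ∧
    (∀ ch ∈ D.chords, ch.map ι ∈ D'.chords) ∧
    ∃ p q : Fin (2 * (n + 1)), Adjacent p q ∧ s(p, q) ∈ D'.chords ∧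
      ∀ x, x ∉ Set.range ι ↔ (x = p ∨ x = q)

/-- A triple move with distinguished pairs `A = {a₁, a₂}`, `B = {b₁, b₂}`,
`C = {c₁, c₂}` of cyclically adjacent points and distinguished chords
`s(a₁, b₁)`, `s(a₂, c₁)`, `s(b₂, c₂)`: `D'` is obtained from `D` by transposing
the two points of each of `A`, `B`, `C`. -/
def TripleMoveAt {n : ℕ} (D D' : ChordDiagram n)
    (a₁ a₂ b₁ b₂ c₁ c₂ : Fin (2 * n)) : Prop :=
  Adjacent a₁ a₂ ∧ Adjacent b₁ b₂ ∧ Adjacent c₁ c₂ ∧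
  ([a₁, a₂, b₁, b₂, c₁, c₂].Pairwise (· ≠ ·)) ∧
  s(a₁, b₁) ∈ D.chords ∧ s(a₂, c₁) ∈ D.chords ∧ s(b₂, c₂) ∈ D.chords ∧
  D'.chords = D.chords.image
    (Sym2.map (Equiv.swap a₁ a₂ * Equiv.swap b₁ b₂ * Equiv.swap c₁ c₂))

/-- Three chords pairwise cross. -/
def PairwiseCross {N : ℕ} (x y z : Sym2 (Fin N)) : Prop :=
  Crosses x y ∧ Crosses x z ∧ Crosses y z

/-- Exactly one of the three pairs among three chords crosses. -/
def ExactlyOneCross {N : ℕ} (x y z : Sym2 (Fin N)) : Prop :=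
  (Crosses x y ∧ ¬ Crosses x z ∧ ¬ Crosses y z) ∨
  (¬ Crosses x y ∧ Crosses x z ∧ ¬ Crosses y z) ∨
  (¬ Crosses x y ∧ ¬ Crosses x z ∧ Crosses y z)

/-- A strong third move: a triple move whose three distinguished chords pairwise
cross in `D`, or whose three replacement chords pairwise cross in `D'`. -/
def StrongThirdMove {n : ℕ} (D D' : ChordDiagram n) : Prop :=
  ∃ a₁ a₂ b₁ b₂ c₁ c₂, TripleMoveAt D D' a₁ a₂ b₁ b₂ c₁ c₂ ∧
    (PairwiseCross s(a₁, b₁) s(a₂, c₁) s(b₂, c₂) ∨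
     PairwiseCross s(a₂, b₂) s(a₁, c₂) s(b₁, c₁))

/-- A weak third move: a triple move such that exactly one pair of the three
distinguished chords crosses in `D`, or exactly one pair of the three
replacement chords crosses in `D'`. -/
def WeakThirdMove {n : ℕ} (D D' : ChordDiagram n) : Prop :=
  ∃ a₁ a₂ b₁ b₂ c₁ c₂, TripleMoveAt D D' a₁ a₂ b₁ b₂ c₁ c₂ ∧
    (ExactlyOneCross s(a₁, b₁) s(a₂, c₁) s(b₂, c₂) ∨
     ExactlyOneCross s(a₂, b₂) s(a₁, c₂) s(b₁, c₁))


/-- An H-configuration: three chords `h`, `p`, `q` such that `p` and `q` both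
cross `h` but `p` and `q` do not cross each other. -/
def HasH {n : ℕ} (D : ChordDiagram n) : Prop :=
  ∃ h p q, h ∈ D.chords ∧ p ∈ D.chords ∧ q ∈ D.chords ∧
    h ≠ p ∧ h ≠ q ∧ p ≠ q ∧
    Crosses p h ∧ Crosses q h ∧ ¬ Crosses p q

/-- A first move, packaged on the type of chord diagrams of all orders. -/
def FirstMoveS (D E : Σ n, ChordDiagram n) : Prop :=
  ∃ (n : ℕ) (A : ChordDiagram n) (B : ChordDiagram (n + 1)),
    D = ⟨n, A⟩ ∧ E = ⟨n + 1, B⟩ ∧ FirstMove A B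

/-- A strong third move, packaged on the type of chord diagrams of all orders. -/
def StrongThirdS (D E : Σ n, ChordDiagram n) : Prop :=
  ∃ (n : ℕ) (A B : ChordDiagram n), D = ⟨n, A⟩ ∧ E = ⟨n, B⟩ ∧ StrongThirdMove A B

/-! ### Auxiliary arithmetic lemmas -/

/-- Linear-arithmetic form of the crossing relation. -/
def xrN (u v w z : ℕ) : Prop :=
  (min u v < min w z ∧ min w z < max u v ∧ max u v < max w z) ∨
  (min w z < min u v ∧ min u v < max w z ∧ max w z < max u v)

/-- Mod-free form of cyclic adjacency. -/
def AdjN (N p q : ℕ) : Prop :=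
  (q = p + 1 ∨ p = q + 1) ∨ (p + 1 = N ∧ q = 0) ∨ (q + 1 = N ∧ p = 0)

lemma adjN_of {N p q : ℕ} (hp : p < N) (hq : q < N)
    (h : (p + 1) % N = q ∨ (q + 1) % N = p) : AdjN N p q := by
  unfold AdjN
  rcases h with h | h
  · rcases Nat.lt_or_ge (p + 1) N with h2 | h2
    · rw [Nat.mod_eq_of_lt h2] at h; omega
    · have h3 : p + 1 = N := by omega
      rw [h3, Nat.mod_self] at h; omega
  · rcases Nat.lt_or_ge (q + 1) N with h2 | h2
    · rw [Nat.mod_eq_of_lt h2] at h; omega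
    · have h3 : q + 1 = N := by omega
      rw [h3, Nat.mod_self] at h; omega

lemma xrN_btw {u v w z : ℕ} (huv : u ≠ v) (hwz : w ≠ z)
    (h1 : w ≠ u) (h2 : w ≠ v) (h3 : z ≠ u) (h4 : z ≠ v) :
    xrN u v w z ↔ ((min u v < w ∧ w < max u v) ↔ ¬ (min u v < z ∧ z < max u v)) := by
  unfold xrN; omega

lemma btw_pair {N u v p q : ℕ} (hadj : AdjN N p q) (hu : u < N) (hv : v < N)
    (hup : u ≠ p) (huq : u ≠ q) (hvp : v ≠ p) (hvq : v ≠ q) :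
    ((min u v < p ∧ p < max u v) ↔ (min u v < q ∧ q < max u v)) := by
  unfold AdjN at hadj; omega

lemma xrN_irrefl (u v : ℕ) : ¬ xrN u v u v := by unfold xrN; omega

lemma iso_not_xrN {N p q w z : ℕ} (hadj : AdjN N p q) (hw : w < N) (hz : z < N) :
    ¬ xrN p q w z ∧ ¬ xrN w z p q := by
  unfold AdjN at hadj; unfold xrN; omega

set_option maxHeartbeats 2000000 in
/-- A strong triple move destroys all three crossings among the distinguished chords. -/
lemma triangle_flip {N a1 a2 b1 b2 c1 c2 : ℕ}
    (ha : a1 < N) (ha' : a2 < N) (hb : b1 < N) (hb' : b2 < N) (hc : c1 < N) (hc' : c2 < N)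
    (hA : AdjN N a1 a2) (hB : AdjN N b1 b2) (hC : AdjN N c1 c2)
    (hd : a1 ≠ a2 ∧ a1 ≠ b1 ∧ a1 ≠ b2 ∧ a1 ≠ c1 ∧ a1 ≠ c2 ∧ a2 ≠ b1 ∧ a2 ≠ b2 ∧ a2 ≠ c1 ∧
      a2 ≠ c2 ∧ b1 ≠ b2 ∧ b1 ≠ c1 ∧ b1 ≠ c2 ∧ b2 ≠ c1 ∧ b2 ≠ c2 ∧ c1 ≠ c2)
    (h1 : xrN a1 b1 a2 c1) (h2 : xrN a1 b1 b2 c2) (h3 : xrN a2 c1 b2 c2) :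
    ¬ xrN a2 b2 a1 c2 ∧ ¬ xrN a2 b2 b1 c1 ∧ ¬ xrN a1 c2 b1 c1 := by
  unfold xrN AdjN at *
  refine ⟨?_, ?_, ?_⟩ <;> omega

/-! ### Crossing via `xrN` -/

lemma vne {N : ℕ} {x y : Fin N} (h : x ≠ y) : x.1 ≠ y.1 := fun h' => h (Fin.ext h')

lemma crosses_of_lt {N : ℕ} {u v x y : Fin N} (h1 : u < x) (h2 : x < v) (h3 : v < y) :
    Crosses s(u,v) s(x,y) := ⟨u, v, x, y, h1, h2, h3, Or.inl ⟨rfl, rfl⟩⟩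

lemma crosses_of_lt' {N : ℕ} {u v x y : Fin N} (h1 : x < u) (h2 : u < y) (h3 : y < v) :
    Crosses s(u,v) s(x,y) := ⟨x, y, u, v, h1, h2, h3, Or.inr ⟨rfl, rfl⟩⟩

lemma xrN_swap_left {u v w z : ℕ} : xrN u v w z ↔ xrN v u w z := by unfold xrN; omega
lemma xrN_swap_right {u v w z : ℕ} : xrN u v w z ↔ xrN u v z w := by unfold xrN; omega

lemma crosses_iff {N : ℕ} (u v w z : Fin N) :
    Crosses s(u,v) s(w,z) ↔ xrN u.1 v.1 w.1 z.1 := by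
  constructor
  · rintro ⟨a, b, x, y, h1, h2, h3, (⟨hc, hd⟩ | ⟨hc, hd⟩)⟩ <;>
      rw [Sym2.eq_iff] at hc hd <;>
      unfold xrN <;>
      simp only [Fin.lt_def] at h1 h2 h3 <;>
      rcases hc with ⟨rfl, rfl⟩ | ⟨rfl, rfl⟩ <;> rcases hd with ⟨rfl, rfl⟩ | ⟨rfl, rfl⟩ <;> omega
  · have key : ∀ (u v w z : Fin N), u.1 ≤ v.1 → w.1 ≤ z.1 → xrN u.1 v.1 w.1 z.1 →
        Crosses s(u,v) s(w,z) := by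
      intro u v w z huv hwz h
      unfold xrN at h
      rw [min_eq_left huv, max_eq_right huv, min_eq_left hwz, max_eq_right hwz] at h
      rcases h with ⟨h1, h2, h3⟩ | ⟨h1, h2, h3⟩
      · exact crosses_of_lt (Fin.lt_def.mpr h1) (Fin.lt_def.mpr h2) (Fin.lt_def.mpr h3)
      · exact crosses_of_lt' (Fin.lt_def.mpr h1) (Fin.lt_def.mpr h2) (Fin.lt_def.mpr h3)
    intro h
    rcases le_total u.1 v.1 with huv | huv <;> rcases le_total w.1 z.1 with hwz | hwz
    · exact key u v w z huv hwz h
    · have := key u v z w huv hwz (by rw [← xrN_swap_right]; exact h)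
      rwa [Sym2.eq_swap (a := z)] at this
    · have := key v u w z huv hwz (by rw [← xrN_swap_left]; exact h)
      rwa [Sym2.eq_swap (a := v)] at this
    · have := key v u z w huv hwz (by rw [← xrN_swap_left, ← xrN_swap_right]; exact h)
      rwa [Sym2.eq_swap (a := v), Sym2.eq_swap (a := z)] at this

lemma crosses_symm {N : ℕ} {c d : Sym2 (Fin N)} (h : Crosses c d) : Crosses d c := by
  obtain ⟨a, b, x, y, h1, h2, h3, h4⟩ := h
  exact ⟨a, b, x, y, h1, h2, h3, h4.symm.imp And.symm And.symm⟩

lemma not_crosses_self {N : ℕ} (c : Sym2 (Fin N)) : ¬ Crosses c c := by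
  obtain ⟨⟨u, v⟩, rfl⟩ := Quot.exists_rep c
  intro h
  exact xrN_irrefl u.1 v.1 ((crosses_iff u v u v).mp h)

/-! ### CyclicBtw lemmas -/

lemma cb_total {N : ℕ} {a b c : Fin N} (h1 : a ≠ b) (h2 : b ≠ c) (h3 : a ≠ c) :
    CyclicBtw a b c ∨ CyclicBtw a c b := by
  have := vne h1; have := vne h2; have := vne h3
  unfold CyclicBtw; simp only [Fin.lt_def]; omega

lemma cb_asymm {N : ℕ} {a b c : Fin N} (h : CyclicBtw a b c) : ¬ CyclicBtw a c b := by
  unfold CyclicBtw at *; simp only [Fin.lt_def] at *; omega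

lemma crosses_iff_cb {N : ℕ} {u v w z : Fin N} (huv : u ≠ v) (hwz : w ≠ z)
    (h1 : w ≠ u) (h2 : w ≠ v) (h3 : z ≠ u) (h4 : z ≠ v) :
    Crosses s(u,v) s(w,z) ↔ (CyclicBtw u w v ↔ ¬ CyclicBtw u z v) := by
  rw [crosses_iff]
  have := vne huv; have := vne hwz; have := vne h1; have := vne h2
  have := vne h3; have := vne h4
  unfold xrN CyclicBtw; simp only [Fin.lt_def]; omega

/-! ### Chord diagram basics -/

lemma chord_unique {n : ℕ} (D : ChordDiagram n) {c d : Sym2 (Fin (2*n))} {x : Fin (2*n)}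
    (hc : c ∈ D.chords) (hd : d ∈ D.chords) (hxc : x ∈ c) (hxd : x ∈ d) : c = d := by
  obtain ⟨e, -, hu⟩ := D.cover x
  exact (hu c ⟨hc, hxc⟩).trans (hu d ⟨hd, hxd⟩).symm

lemma chord_rep {n : ℕ} (D : ChordDiagram n) {c : Sym2 (Fin (2*n))} (hc : c ∈ D.chords) :
    ∃ u v, u ≠ v ∧ c = s(u,v) := by
  obtain ⟨⟨u, v⟩, rfl⟩ := Quot.exists_rep c
  exact ⟨u, v, fun h => D.not_diag _ hc (Sym2.mk_isDiag_iff.mpr h), rfl⟩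

lemma chords_disjoint {n : ℕ} (D : ChordDiagram n) {u v w z : Fin (2*n)}
    (hc : s(u,v) ∈ D.chords) (hd : s(w,z) ∈ D.chords) (hne : s(u,v) ≠ s(w,z)) :
    w ≠ u ∧ w ≠ v ∧ z ≠ u ∧ z ≠ v := by
  refine ⟨?_, ?_, ?_, ?_⟩ <;> rintro rfl
  · exact hne (chord_unique D hc hd (Sym2.mem_mk_left _ _) (Sym2.mem_mk_left _ _))
  · exact hne (chord_unique D hc hd (Sym2.mem_mk_right _ _) (Sym2.mem_mk_left _ _))
  · exact hne (chord_unique D hc hd (Sym2.mem_mk_left _ _) (Sym2.mem_mk_right _ _))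
  · exact hne (chord_unique D hc hd (Sym2.mem_mk_right _ _) (Sym2.mem_mk_right _ _))

lemma adjacent_adjN {N : ℕ} {p q : Fin N} (h : Adjacent p q) : AdjN N p.1 q.1 :=
  adjN_of p.isLt q.isLt h

lemma iso_not_crosses {N : ℕ} {p q : Fin N} (h : Adjacent p q) (d : Sym2 (Fin N)) :
    ¬ Crosses s(p,q) d ∧ ¬ Crosses d s(p,q) := by
  obtain ⟨⟨w, z⟩, rfl⟩ := Quot.exists_rep d
  have h2 := iso_not_xrN (adjacent_adjN h) w.isLt z.isLt
  exact ⟨fun hc => h2.1 ((crosses_iff p q w z).mp hc),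
         fun hc => h2.2 ((crosses_iff w z p q).mp hc)⟩

lemma pairwise_six {α : Type*} {x1 x2 x3 x4 x5 x6 : α} :
    [x1,x2,x3,x4,x5,x6].Pairwise (· ≠ ·) ↔
    (x1≠x2 ∧ x1≠x3 ∧ x1≠x4 ∧ x1≠x5 ∧ x1≠x6 ∧ x2≠x3 ∧ x2≠x4 ∧ x2≠x5 ∧ x2≠x6 ∧
     x3≠x4 ∧ x3≠x5 ∧ x3≠x6 ∧ x4≠x5 ∧ x4≠x6 ∧ x5≠x6) := by
  simp only [List.pairwise_cons, List.mem_cons, List.not_mem_nil, or_false, forall_eq_or_imp,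
    forall_eq, List.Pairwise.nil, and_true, ne_eq, IsEmpty.forall_iff, implies_true, true_and,
    List.mem_singleton]
  tauto
/-! ### Invariance under the first move -/

lemma firstMove_iff {n : ℕ} {A : ChordDiagram n} {B : ChordDiagram (n + 1)}
    (hm : FirstMove A B) : HasH A ↔ HasH B := by
  obtain ⟨ι, hinj, hcb, hmap, p0, q0, hadj, hiso, hrange⟩ := hm
  have hcbr : ∀ a b c : Fin (2*n), a ≠ b → b ≠ c → a ≠ c →
      (CyclicBtw (ι a) (ι b) (ι c) ↔ CyclicBtw a b c) := by
    intro a b c h1 h2 h3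
    constructor
    · intro h
      rcases cb_total h1 h2 h3 with h' | h'
      · exact h'
      · exact absurd h (cb_asymm (hcb _ _ _ h'))
    · exact hcb a b c
  have hmapcr : ∀ u v w z : Fin (2*n), u ≠ v → w ≠ z → w ≠ u → w ≠ v → z ≠ u → z ≠ v →
      (Crosses s(ι u, ι v) s(ι w, ι z) ↔ Crosses s(u,v) s(w,z)) := by
    intro u v w z huv hwz h1 h2 h3 h4
    rw [crosses_iff_cb (hinj.ne huv) (hinj.ne hwz) (hinj.ne h1) (hinj.ne h2) (hinj.ne h3)
        (hinj.ne h4), crosses_iff_cb huv hwz h1 h2 h3 h4,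
      hcbr u w v (Ne.symm h1) h2 huv, hcbr u z v (Ne.symm h3) h4 huv]
  have hmapc : ∀ c ∈ A.chords, ∀ d ∈ A.chords,
      (Crosses (Sym2.map ι c) (Sym2.map ι d) ↔ Crosses c d) := by
    intro c hc d hd
    by_cases hcd : c = d
    · subst hcd
      constructor <;> intro h <;> exact absurd h (not_crosses_self _)
    · obtain ⟨u, v, huv, rfl⟩ := chord_rep A hc
      obtain ⟨w, z, hwz, rfl⟩ := chord_rep A hd
      obtain ⟨h1, h2, h3, h4⟩ := chords_disjoint A hc hd hcd
      rw [Sym2.map_pair_eq, Sym2.map_pair_eq]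
      exact hmapcr u v w z huv hwz h1 h2 h3 h4
  have hclass : ∀ c ∈ B.chords, c = s(p0, q0) ∨ ∃ ch ∈ A.chords, c = Sym2.map ι ch := by
    intro c hc
    obtain ⟨u, v, huv, rfl⟩ := chord_rep B hc
    by_cases hu : u ∈ Set.range ι
    · obtain ⟨y, rfl⟩ := hu
      obtain ⟨ch, ⟨hch, hy⟩, -⟩ := A.cover y
      exact Or.inr ⟨ch, hch, chord_unique B hc (hmap ch hch) (Sym2.mem_mk_left _ _)
        (Sym2.mem_map.mpr ⟨y, hy, rfl⟩)⟩
    · rcases (hrange u).mp hu with rfl | rfl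
      · exact Or.inl (chord_unique B hc hiso (Sym2.mem_mk_left _ _) (Sym2.mem_mk_left _ _))
      · exact Or.inl (chord_unique B hc hiso (Sym2.mem_mk_left _ _) (Sym2.mem_mk_right _ _))
  constructor
  · rintro ⟨h, p, q, hh, hp, hq, ne1, ne2, ne3, c1, c2, c3⟩
    exact ⟨Sym2.map ι h, Sym2.map ι p, Sym2.map ι q, hmap h hh, hmap p hp, hmap q hq,
      fun e => ne1 (Sym2.map.injective hinj e), fun e => ne2 (Sym2.map.injective hinj e),
      fun e => ne3 (Sym2.map.injective hinj e),
      (hmapc p hp h hh).mpr c1, (hmapc q hq h hh).mpr c2,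
      fun cr => c3 ((hmapc p hp q hq).mp cr)⟩
  · rintro ⟨h, p, q, hh, hp, hq, ne1, ne2, ne3, c1, c2, c3⟩
    rcases hclass h hh with rfl | ⟨h0, hh0, rfl⟩
    · exact absurd c1 (iso_not_crosses hadj p).2
    rcases hclass p hp with rfl | ⟨pp, hp0, rfl⟩
    · exact absurd c1 (iso_not_crosses hadj _).1
    rcases hclass q hq with rfl | ⟨qq, hq0, rfl⟩
    · exact absurd c2 (iso_not_crosses hadj _).1
    exact ⟨h0, pp, qq, hh0, hp0, hq0,
      fun e => ne1 (by rw [e]), fun e => ne2 (by rw [e]), fun e => ne3 (by rw [e]),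
      (hmapc pp hp0 h0 hh0).mp c1, (hmapc qq hq0 h0 hh0).mp c2,
      fun cr => c3 ((hmapc pp hp0 qq hq0).mpr cr)⟩
lemma parity_cases {P Q R : Prop}
    (h : (¬P ∧ ¬Q ∧ ¬R) ∨ (P ∧ Q ∧ ¬R) ∨ (P ∧ ¬Q ∧ R) ∨ (¬P ∧ Q ∧ R)) :
    (P → Q → ¬R) ∧ (Q → R → ¬P) ∧ (P → R → ¬Q) ∧
    (P → ¬Q → R) ∧ (Q → ¬P → R) ∧ (P → ¬R → Q) ∧
    (R → ¬P → Q) ∧ (Q → ¬R → P) ∧ (R → ¬Q → P) := by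
  by_cases h1 : P <;> by_cases h2 : Q <;> by_cases h3 : R <;> simp_all

lemma parity_prop (PA1 PA2 PB1 PB2 PC1 PC2 : Prop)
    (pa : PA1 ↔ PA2) (pb : PB1 ↔ PB2) (pc : PC1 ↔ PC2) :
    (¬(PA1 ↔ ¬PB1) ∧ ¬(PA2 ↔ ¬PC1) ∧ ¬(PB2 ↔ ¬PC2)) ∨
    ((PA1 ↔ ¬PB1) ∧ (PA2 ↔ ¬PC1) ∧ ¬(PB2 ↔ ¬PC2)) ∨
    ((PA1 ↔ ¬PB1) ∧ ¬(PA2 ↔ ¬PC1) ∧ (PB2 ↔ ¬PC2)) ∨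
    (¬(PA1 ↔ ¬PB1) ∧ (PA2 ↔ ¬PC1) ∧ (PB2 ↔ ¬PC2)) := by
  by_cases h1 : PA1 <;> by_cases h2 : PB1 <;> by_cases h3 : PC1 <;> simp_all

/-! ### Invariance under the strong third move -/

set_option maxHeartbeats 1600000 in
lemma strong_step {n : ℕ} {D D' : ChordDiagram n} {a₁ a₂ b₁ b₂ c₁ c₂ : Fin (2 * n)}
    (hmv : TripleMoveAt D D' a₁ a₂ b₁ b₂ c₁ c₂)
    (hT : PairwiseCross s(a₁, b₁) s(a₂, c₁) s(b₂, c₂)) : HasH D ↔ HasH D' := by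
  obtain ⟨hA, hB, hC, hpw, hX, hY, hZ, hE⟩ := hmv
  obtain ⟨d1, d2, d3, d4, d5, d6, d7, d8, d9, d10, d11, d12, d13, d14, d15⟩ :=
    pairwise_six.mp hpw
  set σ : Equiv.Perm (Fin (2 * n)) :=
    Equiv.swap a₁ a₂ * Equiv.swap b₁ b₂ * Equiv.swap c₁ c₂ with hσ
  have happ : ∀ x, σ x = Equiv.swap a₁ a₂ (Equiv.swap b₁ b₂ (Equiv.swap c₁ c₂ x)) :=
    fun x => rfl
  have sa1 : σ a₁ = a₂ := by
    rw [happ, Equiv.swap_apply_of_ne_of_ne d4 d5, Equiv.swap_apply_of_ne_of_ne d2 d3,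
      Equiv.swap_apply_left]
  have sa2 : σ a₂ = a₁ := by
    rw [happ, Equiv.swap_apply_of_ne_of_ne d8 d9, Equiv.swap_apply_of_ne_of_ne d6 d7,
      Equiv.swap_apply_right]
  have sb1 : σ b₁ = b₂ := by
    rw [happ, Equiv.swap_apply_of_ne_of_ne d11 d12, Equiv.swap_apply_left,
      Equiv.swap_apply_of_ne_of_ne (Ne.symm d3) (Ne.symm d7)]
  have sb2 : σ b₂ = b₁ := by
    rw [happ, Equiv.swap_apply_of_ne_of_ne d13 d14, Equiv.swap_apply_right,
      Equiv.swap_apply_of_ne_of_ne (Ne.symm d2) (Ne.symm d6)]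
  have sc1 : σ c₁ = c₂ := by
    rw [happ, Equiv.swap_apply_left, Equiv.swap_apply_of_ne_of_ne (Ne.symm d12) (Ne.symm d14),
      Equiv.swap_apply_of_ne_of_ne (Ne.symm d5) (Ne.symm d9)]
  have sc2 : σ c₂ = c₁ := by
    rw [happ, Equiv.swap_apply_right, Equiv.swap_apply_of_ne_of_ne (Ne.symm d11) (Ne.symm d13),
      Equiv.swap_apply_of_ne_of_ne (Ne.symm d4) (Ne.symm d8)]
  have sfix : ∀ x, x ≠ a₁ → x ≠ a₂ → x ≠ b₁ → x ≠ b₂ → x ≠ c₁ → x ≠ c₂ → σ x = x := by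
    intro x h1 h2 h3 h4 h5 h6
    rw [happ, Equiv.swap_apply_of_ne_of_ne h5 h6, Equiv.swap_apply_of_ne_of_ne h3 h4,
      Equiv.swap_apply_of_ne_of_ne h1 h2]
  have minj : Function.Injective (Sym2.map σ) := Sym2.map.injective σ.injective
  have mX : Sym2.map σ s(a₁, b₁) = s(a₂, b₂) := by rw [Sym2.map_pair_eq, sa1, sb1]
  have mY : Sym2.map σ s(a₂, c₁) = s(a₁, c₂) := by rw [Sym2.map_pair_eq, sa2, sc1]
  have mZ : Sym2.map σ s(b₂, c₂) = s(b₁, c₁) := by rw [Sym2.map_pair_eq, sb2, sc2]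
  have hmem : ∀ e ∈ D.chords, Sym2.map σ e ∈ D'.chords := by
    intro e he; rw [hE]; exact Finset.mem_image_of_mem _ he
  have hmem' : ∀ e' ∈ D'.chords, ∃ e ∈ D.chords, Sym2.map σ e = e' := by
    intro e' he'; rw [hE] at he'; exact Finset.mem_image.mp he'
  -- endpoints of non-distinguished chords avoid the six points
  have havoid : ∀ e ∈ D.chords, ¬(e = s(a₁,b₁) ∨ e = s(a₂,c₁) ∨ e = s(b₂,c₂)) →
      ∀ x, x ∈ e → x ≠ a₁ ∧ x ≠ a₂ ∧ x ≠ b₁ ∧ x ≠ b₂ ∧ x ≠ c₁ ∧ x ≠ c₂ := by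
    intro e he hne x hx
    refine ⟨?_, ?_, ?_, ?_, ?_, ?_⟩ <;> rintro rfl
    · exact hne (Or.inl (chord_unique D he hX hx (Sym2.mem_mk_left _ _)))
    · exact hne (Or.inr (Or.inl (chord_unique D he hY hx (Sym2.mem_mk_left _ _))))
    · exact hne (Or.inl (chord_unique D he hX hx (Sym2.mem_mk_right _ _)))
    · exact hne (Or.inr (Or.inr (chord_unique D he hZ hx (Sym2.mem_mk_left _ _))))
    · exact hne (Or.inr (Or.inl (chord_unique D he hY hx (Sym2.mem_mk_right _ _))))
    · exact hne (Or.inr (Or.inr (chord_unique D he hZ hx (Sym2.mem_mk_right _ _))))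
  have hfix : ∀ e ∈ D.chords, ¬(e = s(a₁,b₁) ∨ e = s(a₂,c₁) ∨ e = s(b₂,c₂)) →
      Sym2.map σ e = e := by
    intro e he hne
    obtain ⟨u, v, huv, rfl⟩ := chord_rep D he
    obtain ⟨g1, g2, g3, g4, g5, g6⟩ := havoid _ he hne u (Sym2.mem_mk_left _ _)
    obtain ⟨f1, f2, f3, f4, f5, f6⟩ := havoid _ he hne v (Sym2.mem_mk_right _ _)
    rw [Sym2.map_pair_eq, sfix u g1 g2 g3 g4 g5 g6, sfix v f1 f2 f3 f4 f5 f6]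
  -- crossing with a non-distinguished chord is preserved
  have hF1 : ∀ e ∈ D.chords, ¬(e = s(a₁,b₁) ∨ e = s(a₂,c₁) ∨ e = s(b₂,c₂)) →
      ∀ f ∈ D.chords, (Crosses e f ↔ Crosses e (Sym2.map σ f)) := by
    intro e he hne f hf
    by_cases hef : e = f
    · subst hef; rw [hfix e he hne]
    · obtain ⟨u, v, huv, rfl⟩ := chord_rep D he
      obtain ⟨w, z, hwz, rfl⟩ := chord_rep D hf
      obtain ⟨h1, h2, h3, h4⟩ := chords_disjoint D he hf hef
      obtain ⟨g1, g2, g3, g4, g5, g6⟩ := havoid _ he hne u (Sym2.mem_mk_left _ _)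
      obtain ⟨f1, f2, f3, f4, f5, f6⟩ := havoid _ he hne v (Sym2.mem_mk_right _ _)
      have hstep : ∀ x : Fin (2 * n), x ≠ u → x ≠ v →
          ((σ x).1 ≠ u.1 ∧ (σ x).1 ≠ v.1) ∧
          ((min u.1 v.1 < x.1 ∧ x.1 < max u.1 v.1) ↔
            (min u.1 v.1 < (σ x).1 ∧ (σ x).1 < max u.1 v.1)) := by
        intro x hxu hxv
        by_cases e1 : x = a₁
        · subst e1; rw [sa1]
          exact ⟨⟨vne (Ne.symm g2), vne (Ne.symm f2)⟩,
            btw_pair (adjacent_adjN hA) u.isLt v.isLt (vne g1) (vne g2) (vne f1) (vne f2)⟩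
        by_cases e2 : x = a₂
        · subst e2; rw [sa2]
          exact ⟨⟨vne (Ne.symm g1), vne (Ne.symm f1)⟩,
            (btw_pair (adjacent_adjN hA) u.isLt v.isLt (vne g1) (vne g2) (vne f1) (vne f2)).symm⟩
        by_cases e3 : x = b₁
        · subst e3; rw [sb1]
          exact ⟨⟨vne (Ne.symm g4), vne (Ne.symm f4)⟩,
            btw_pair (adjacent_adjN hB) u.isLt v.isLt (vne g3) (vne g4) (vne f3) (vne f4)⟩
        by_cases e4 : x = b₂
        · subst e4; rw [sb2]
          exact ⟨⟨vne (Ne.symm g3), vne (Ne.symm f3)⟩,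
            (btw_pair (adjacent_adjN hB) u.isLt v.isLt (vne g3) (vne g4) (vne f3) (vne f4)).symm⟩
        by_cases e5 : x = c₁
        · subst e5; rw [sc1]
          exact ⟨⟨vne (Ne.symm g6), vne (Ne.symm f6)⟩,
            btw_pair (adjacent_adjN hC) u.isLt v.isLt (vne g5) (vne g6) (vne f5) (vne f6)⟩
        by_cases e6 : x = c₂
        · subst e6; rw [sc2]
          exact ⟨⟨vne (Ne.symm g5), vne (Ne.symm f5)⟩,
            (btw_pair (adjacent_adjN hC) u.isLt v.isLt (vne g5) (vne g6) (vne f5) (vne f6)).symm⟩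
        · rw [sfix x e1 e2 e3 e4 e5 e6]
          exact ⟨⟨vne hxu, vne hxv⟩, Iff.rfl⟩
      obtain ⟨⟨i1, i2⟩, hw⟩ := hstep w h1 h2
      obtain ⟨⟨i3, i4⟩, hz⟩ := hstep z h3 h4
      rw [Sym2.map_pair_eq, crosses_iff u v w z, crosses_iff u v (σ w) (σ z),
        xrN_btw (vne huv) (vne hwz) (vne h1) (vne h2) (vne h3) (vne h4),
        xrN_btw (vne huv) (vne (σ.injective.ne hwz)) i1 i2 i3 i4, hw, hz]
  -- parity: a non-distinguished chord crosses 0 or 2 of the distinguished chords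
  have hF3 : ∀ e ∈ D.chords, ¬(e = s(a₁,b₁) ∨ e = s(a₂,c₁) ∨ e = s(b₂,c₂)) →
      ((¬Crosses e s(a₁,b₁) ∧ ¬Crosses e s(a₂,c₁) ∧ ¬Crosses e s(b₂,c₂)) ∨
       (Crosses e s(a₁,b₁) ∧ Crosses e s(a₂,c₁) ∧ ¬Crosses e s(b₂,c₂)) ∨
       (Crosses e s(a₁,b₁) ∧ ¬Crosses e s(a₂,c₁) ∧ Crosses e s(b₂,c₂)) ∨
       (¬Crosses e s(a₁,b₁) ∧ Crosses e s(a₂,c₁) ∧ Crosses e s(b₂,c₂))) := by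
    intro e he hne
    obtain ⟨u, v, huv, rfl⟩ := chord_rep D he
    obtain ⟨g1, g2, g3, g4, g5, g6⟩ := havoid _ he hne u (Sym2.mem_mk_left _ _)
    obtain ⟨f1, f2, f3, f4, f5, f6⟩ := havoid _ he hne v (Sym2.mem_mk_right _ _)
    rw [crosses_iff u v a₁ b₁, crosses_iff u v a₂ c₁, crosses_iff u v b₂ c₂,
      xrN_btw (vne huv) (vne d2) (vne (Ne.symm g1)) (vne (Ne.symm f1)) (vne (Ne.symm g3))
        (vne (Ne.symm f3)),
      xrN_btw (vne huv) (vne d8) (vne (Ne.symm g2)) (vne (Ne.symm f2)) (vne (Ne.symm g5))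
        (vne (Ne.symm f5)),
      xrN_btw (vne huv) (vne d14) (vne (Ne.symm g4)) (vne (Ne.symm f4)) (vne (Ne.symm g6))
        (vne (Ne.symm f6))]
    have pa := btw_pair (adjacent_adjN hA) u.isLt v.isLt (vne g1) (vne g2) (vne f1) (vne f2)
    have pb := btw_pair (adjacent_adjN hB) u.isLt v.isLt (vne g3) (vne g4) (vne f3) (vne f4)
    have pc := btw_pair (adjacent_adjN hC) u.isLt v.isLt (vne g5) (vne g6) (vne f5) (vne f6)
    exact parity_prop _ _ _ _ _ _ pa pb pc
  -- the images of the distinguished chords are pairwise non-crossing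
  obtain ⟨t1, t2, t3⟩ := hT
  have hF2 : ¬Crosses s(a₂,b₂) s(a₁,c₂) ∧ ¬Crosses s(a₂,b₂) s(b₁,c₁) ∧
      ¬Crosses s(a₁,c₂) s(b₁,c₁) := by
    have := triangle_flip a₁.isLt a₂.isLt b₁.isLt b₂.isLt c₁.isLt c₂.isLt
      (adjacent_adjN hA) (adjacent_adjN hB) (adjacent_adjN hC)
      ⟨vne d1, vne d2, vne d3, vne d4, vne d5, vne d6, vne d7, vne d8, vne d9, vne d10,
        vne d11, vne d12, vne d13, vne d14, vne d15⟩
      ((crosses_iff a₁ b₁ a₂ c₁).mp t1) ((crosses_iff a₁ b₁ b₂ c₂).mp t2)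
      ((crosses_iff a₂ c₁ b₂ c₂).mp t3)
    exact ⟨fun h => this.1 ((crosses_iff _ _ _ _).mp h),
      fun h => this.2.1 ((crosses_iff _ _ _ _).mp h),
      fun h => this.2.2 ((crosses_iff _ _ _ _).mp h)⟩
  -- the distinguished chords are pairwise distinct
  have neXY : s(a₁,b₁) ≠ s(a₂,c₁) := by
    intro h; rw [Sym2.eq_iff] at h
    rcases h with ⟨h, -⟩ | ⟨h, -⟩
    · exact d1 h
    · exact d4 h
  have neXZ : s(a₁,b₁) ≠ s(b₂,c₂) := by
    intro h; rw [Sym2.eq_iff] at h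
    rcases h with ⟨h, -⟩ | ⟨h, -⟩
    · exact d3 h
    · exact d5 h
  have neYZ : s(a₂,c₁) ≠ s(b₂,c₂) := by
    intro h; rw [Sym2.eq_iff] at h
    rcases h with ⟨h, -⟩ | ⟨h, -⟩
    · exact d7 h
    · exact d9 h
  have hTmem : ∀ x, (x = s(a₁,b₁) ∨ x = s(a₂,c₁) ∨ x = s(b₂,c₂)) → x ∈ D.chords := by
    rintro x (rfl | rfl | rfl) <;> assumption
  have hT1 : ∀ x y, (x = s(a₁,b₁) ∨ x = s(a₂,c₁) ∨ x = s(b₂,c₂)) →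
      (y = s(a₁,b₁) ∨ y = s(a₂,c₁) ∨ y = s(b₂,c₂)) → x ≠ y → Crosses x y := by
    rintro x y (rfl | rfl | rfl) (rfl | rfl | rfl) hne <;>
      first
      | exact absurd rfl hne
      | exact t1 | exact t2 | exact t3
      | exact crosses_symm t1 | exact crosses_symm t2 | exact crosses_symm t3
  have hT2 : ∀ x y, (x = s(a₁,b₁) ∨ x = s(a₂,c₁) ∨ x = s(b₂,c₂)) →
      (y = s(a₁,b₁) ∨ y = s(a₂,c₁) ∨ y = s(b₂,c₂)) → x ≠ y →
      ¬ Crosses (Sym2.map σ x) (Sym2.map σ y) := by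
    rintro x y (rfl | rfl | rfl) (rfl | rfl | rfl) hne <;>
      simp only [mX, mY, mZ] <;>
      first
      | exact absurd rfl hne
      | exact hF2.1 | exact hF2.2.1 | exact hF2.2.2
      | exact fun h => hF2.1 (crosses_symm h)
      | exact fun h => hF2.2.1 (crosses_symm h)
      | exact fun h => hF2.2.2 (crosses_symm h)
  have hthird : ∀ x y, (x = s(a₁,b₁) ∨ x = s(a₂,c₁) ∨ x = s(b₂,c₂)) →
      (y = s(a₁,b₁) ∨ y = s(a₂,c₁) ∨ y = s(b₂,c₂)) → x ≠ y →
      ∃ r, (r = s(a₁,b₁) ∨ r = s(a₂,c₁) ∨ r = s(b₂,c₂)) ∧ r ≠ x ∧ r ≠ y := by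
    rintro x y (rfl | rfl | rfl) (rfl | rfl | rfl) hne
    · exact absurd rfl hne
    · exact ⟨s(b₂,c₂), Or.inr (Or.inr rfl), Ne.symm neXZ, Ne.symm neYZ⟩
    · exact ⟨s(a₂,c₁), Or.inr (Or.inl rfl), Ne.symm neXY, neYZ⟩
    · exact ⟨s(b₂,c₂), Or.inr (Or.inr rfl), Ne.symm neYZ, Ne.symm neXZ⟩
    · exact absurd rfl hne
    · exact ⟨s(a₁,b₁), Or.inl rfl, neXY, neXZ⟩
    · exact ⟨s(a₂,c₁), Or.inr (Or.inl rfl), neYZ, Ne.symm neXY⟩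
    · exact ⟨s(a₁,b₁), Or.inl rfl, neXZ, neXY⟩
    · exact absurd rfl hne
  have hT3 : ∀ e ∈ D.chords, ¬(e = s(a₁,b₁) ∨ e = s(a₂,c₁) ∨ e = s(b₂,c₂)) →
      ∀ x y r, (x = s(a₁,b₁) ∨ x = s(a₂,c₁) ∨ x = s(b₂,c₂)) →
      (y = s(a₁,b₁) ∨ y = s(a₂,c₁) ∨ y = s(b₂,c₂)) →
      (r = s(a₁,b₁) ∨ r = s(a₂,c₁) ∨ r = s(b₂,c₂)) →
      x ≠ y → r ≠ x → r ≠ y → Crosses e x → ¬ Crosses e y → Crosses e r := by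
    intro e he hne x y r hx hy hr hxy hrx hry hcx hcy
    have pc9 := parity_cases (hF3 e he hne)
    rcases hx with rfl | rfl | rfl <;> rcases hy with rfl | rfl | rfl <;>
      rcases hr with rfl | rfl | rfl <;>
      first
      | exact absurd rfl hxy
      | exact absurd rfl hrx
      | exact absurd rfl hry
      | exact pc9.2.2.2.1 hcx hcy
      | exact pc9.2.2.2.2.1 hcx hcy
      | exact pc9.2.2.2.2.2.1 hcx hcy
      | exact pc9.2.2.2.2.2.2.1 hcx hcy
      | exact pc9.2.2.2.2.2.2.2.1 hcx hcy
      | exact pc9.2.2.2.2.2.2.2.2 hcx hcy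
  have hT3' : ∀ e ∈ D.chords, ¬(e = s(a₁,b₁) ∨ e = s(a₂,c₁) ∨ e = s(b₂,c₂)) →
      ∀ x y r, (x = s(a₁,b₁) ∨ x = s(a₂,c₁) ∨ x = s(b₂,c₂)) →
      (y = s(a₁,b₁) ∨ y = s(a₂,c₁) ∨ y = s(b₂,c₂)) →
      (r = s(a₁,b₁) ∨ r = s(a₂,c₁) ∨ r = s(b₂,c₂)) →
      x ≠ y → r ≠ x → r ≠ y → Crosses e x → Crosses e y → ¬ Crosses e r := by
    intro e he hne x y r hx hy hr hxy hrx hry hcx hcy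
    have pc9 := parity_cases (hF3 e he hne)
    rcases hx with rfl | rfl | rfl <;> rcases hy with rfl | rfl | rfl <;>
      rcases hr with rfl | rfl | rfl <;>
      first
      | exact absurd rfl hxy
      | exact absurd rfl hrx
      | exact absurd rfl hry
      | exact pc9.1 hcx hcy
      | exact pc9.2.1 hcx hcy
      | exact pc9.2.2.1 hcx hcy
      | exact fun hc => pc9.1 hcx hc hcy
      | exact fun hc => pc9.2.1 hcx hc hcy
      | exact fun hc => pc9.2.2.1 hcx hc hcy
      | exact fun hc => pc9.1 hcy hc hcx
      | exact fun hc => pc9.2.1 hcy hc hcx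
      | exact fun hc => pc9.2.2.1 hcy hc hcx
      | exact fun hc => pc9.1 hc hcx hcy
      | exact fun hc => pc9.2.1 hc hcx hcy
      | exact fun hc => pc9.2.2.1 hc hcx hcy
      | exact fun hc => pc9.1 hc hcy hcx
      | exact fun hc => pc9.2.1 hc hcy hcx
      | exact fun hc => pc9.2.2.1 hc hcy hcx
  have htrans : ∀ e ∈ D.chords, ∀ f ∈ D.chords,
      (¬(e = s(a₁,b₁) ∨ e = s(a₂,c₁) ∨ e = s(b₂,c₂)) ∨
       ¬(f = s(a₁,b₁) ∨ f = s(a₂,c₁) ∨ f = s(b₂,c₂))) →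
      (Crosses e f ↔ Crosses (Sym2.map σ e) (Sym2.map σ f)) := by
    intro e he f hf h
    rcases h with h | h
    · rw [hfix e he h]
      exact hF1 e he h f hf
    · rw [hfix f hf h]
      constructor
      · intro hc; exact crosses_symm ((hF1 f hf h e he).mp (crosses_symm hc))
      · intro hc; exact crosses_symm ((hF1 f hf h e he).mpr (crosses_symm hc))
  constructor
  · rintro ⟨h, p, q, hh, hp, hq, ne1, ne2, ne3, c1, c2, c3⟩
    have generic : (¬(p = s(a₁,b₁) ∨ p = s(a₂,c₁) ∨ p = s(b₂,c₂)) ∨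
          ¬(h = s(a₁,b₁) ∨ h = s(a₂,c₁) ∨ h = s(b₂,c₂))) →
        (¬(q = s(a₁,b₁) ∨ q = s(a₂,c₁) ∨ q = s(b₂,c₂)) ∨
          ¬(h = s(a₁,b₁) ∨ h = s(a₂,c₁) ∨ h = s(b₂,c₂))) →
        (¬(p = s(a₁,b₁) ∨ p = s(a₂,c₁) ∨ p = s(b₂,c₂)) ∨
          ¬(q = s(a₁,b₁) ∨ q = s(a₂,c₁) ∨ q = s(b₂,c₂))) → HasH D' := by
      intro g1 g2 g3
      exact ⟨Sym2.map σ h, Sym2.map σ p, Sym2.map σ q, hmem h hh, hmem p hp, hmem q hq,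
        fun e => ne1 (minj e), fun e => ne2 (minj e), fun e => ne3 (minj e),
        (htrans p hp h hh g1).mp c1, (htrans q hq h hh g2).mp c2,
        fun cc => c3 ((htrans p hp q hq g3).mpr cc)⟩
    by_cases hpT : p = s(a₁,b₁) ∨ p = s(a₂,c₁) ∨ p = s(b₂,c₂)
    · by_cases hqT : q = s(a₁,b₁) ∨ q = s(a₂,c₁) ∨ q = s(b₂,c₂)
      · exact absurd (hT1 p q hpT hqT ne3) c3
      · by_cases hhT : h = s(a₁,b₁) ∨ h = s(a₂,c₁) ∨ h = s(b₂,c₂)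
        · obtain ⟨r, hrT, hrh, hrp⟩ := hthird h p hhT hpT ne1
          have cqr : Crosses q r := hT3 q hq hqT h p r hhT hpT hrT ne1 hrh hrp c2
            (fun cc => c3 (crosses_symm cc))
          exact ⟨Sym2.map σ q, Sym2.map σ h, Sym2.map σ r,
            hmem q hq, hmem h hh, hmem r (hTmem r hrT),
            fun e => ne2 (minj e).symm,
            fun e => hqT (by rw [minj e]; exact hrT),
            fun e => hrh (minj e).symm,
            (htrans h hh q hq (Or.inr hqT)).mp (crosses_symm c2),
            (htrans r (hTmem r hrT) q hq (Or.inr hqT)).mp (crosses_symm cqr),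
            hT2 h r hhT hrT (Ne.symm hrh)⟩
        · exact generic (Or.inr hhT) (Or.inr hhT) (Or.inr hqT)
    · by_cases hqT : q = s(a₁,b₁) ∨ q = s(a₂,c₁) ∨ q = s(b₂,c₂)
      · by_cases hhT : h = s(a₁,b₁) ∨ h = s(a₂,c₁) ∨ h = s(b₂,c₂)
        · obtain ⟨r, hrT, hrh, hrq⟩ := hthird h q hhT hqT ne2
          have cpr : Crosses p r := hT3 p hp hpT h q r hhT hqT hrT ne2 hrh hrq c1 c3
          exact ⟨Sym2.map σ p, Sym2.map σ h, Sym2.map σ r,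
            hmem p hp, hmem h hh, hmem r (hTmem r hrT),
            fun e => ne1 (minj e).symm,
            fun e => hpT (by rw [minj e]; exact hrT),
            fun e => hrh (minj e).symm,
            (htrans h hh p hp (Or.inr hpT)).mp (crosses_symm c1),
            (htrans r (hTmem r hrT) p hp (Or.inr hpT)).mp (crosses_symm cpr),
            hT2 h r hhT hrT (Ne.symm hrh)⟩
        · exact generic (Or.inl hpT) (Or.inr hhT) (Or.inl hpT)
      · exact generic (Or.inl hpT) (Or.inl hqT) (Or.inl hpT)
  · rintro ⟨h', p', q', hh', hp', hq', ne1, ne2, ne3, c1, c2, c3⟩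
    obtain ⟨h, hh, rfl⟩ := hmem' h' hh'
    obtain ⟨p, hp, rfl⟩ := hmem' p' hp'
    obtain ⟨q, hq, rfl⟩ := hmem' q' hq'
    have ne1' : h ≠ p := fun e => ne1 (by rw [e])
    have ne2' : h ≠ q := fun e => ne2 (by rw [e])
    have ne3' : p ≠ q := fun e => ne3 (by rw [e])
    have hnb1 : ¬((h = s(a₁,b₁) ∨ h = s(a₂,c₁) ∨ h = s(b₂,c₂)) ∧
        (p = s(a₁,b₁) ∨ p = s(a₂,c₁) ∨ p = s(b₂,c₂))) :=
      fun ⟨u1, u2⟩ => hT2 p h u2 u1 (Ne.symm ne1') c1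
    have hnb2 : ¬((h = s(a₁,b₁) ∨ h = s(a₂,c₁) ∨ h = s(b₂,c₂)) ∧
        (q = s(a₁,b₁) ∨ q = s(a₂,c₁) ∨ q = s(b₂,c₂))) :=
      fun ⟨u1, u2⟩ => hT2 q h u2 u1 (Ne.symm ne2') c2
    by_cases hhT : h = s(a₁,b₁) ∨ h = s(a₂,c₁) ∨ h = s(b₂,c₂)
    · have hpT : ¬(p = s(a₁,b₁) ∨ p = s(a₂,c₁) ∨ p = s(b₂,c₂)) := fun u => hnb1 ⟨hhT, u⟩
      have hqT : ¬(q = s(a₁,b₁) ∨ q = s(a₂,c₁) ∨ q = s(b₂,c₂)) := fun u => hnb2 ⟨hhT, u⟩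
      exact ⟨h, p, q, hh, hp, hq, ne1', ne2', ne3',
        (htrans p hp h hh (Or.inl hpT)).mpr c1, (htrans q hq h hh (Or.inl hqT)).mpr c2,
        fun cc => c3 ((htrans p hp q hq (Or.inl hpT)).mp cc)⟩
    · have e1 : Crosses p h := (htrans p hp h hh (Or.inr hhT)).mpr c1
      have e2 : Crosses q h := (htrans q hq h hh (Or.inr hhT)).mpr c2
      by_cases hpT : p = s(a₁,b₁) ∨ p = s(a₂,c₁) ∨ p = s(b₂,c₂)
      · by_cases hqT : q = s(a₁,b₁) ∨ q = s(a₂,c₁) ∨ q = s(b₂,c₂)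
        · obtain ⟨r, hrT, hrp, hrq⟩ := hthird p q hpT hqT ne3'
          have hnr : ¬ Crosses h r := hT3' h hh hhT p q r hpT hqT hrT ne3' hrp hrq
            (crosses_symm e1) (crosses_symm e2)
          exact ⟨p, h, r, hp, hh, hTmem r hrT,
            Ne.symm ne1',
            Ne.symm hrp,
            fun e => hhT (by rw [e]; exact hrT),
            crosses_symm e1,
            hT1 r p hrT hpT hrp,
            hnr⟩
        · exact ⟨h, p, q, hh, hp, hq, ne1', ne2', ne3', e1, e2,
            fun cc => c3 ((htrans p hp q hq (Or.inr hqT)).mp cc)⟩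
      · exact ⟨h, p, q, hh, hp, hq, ne1', ne2', ne3', e1, e2,
          fun cc => c3 ((htrans p hp q hq (Or.inl hpT)).mp cc)⟩
lemma tripleMove_symm {n : ℕ} {D D' : ChordDiagram n} {a₁ a₂ b₁ b₂ c₁ c₂ : Fin (2 * n)}
    (hmv : TripleMoveAt D D' a₁ a₂ b₁ b₂ c₁ c₂) :
    TripleMoveAt D' D a₂ a₁ b₂ b₁ c₂ c₁ := by
  obtain ⟨hA, hB, hC, hpw, hX, hY, hZ, hE⟩ := hmv
  obtain ⟨d1, d2, d3, d4, d5, d6, d7, d8, d9, d10, d11, d12, d13, d14, d15⟩ :=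
    pairwise_six.mp hpw
  set σ : Equiv.Perm (Fin (2 * n)) :=
    Equiv.swap a₁ a₂ * Equiv.swap b₁ b₂ * Equiv.swap c₁ c₂ with hσ
  have happ : ∀ x, σ x = Equiv.swap a₁ a₂ (Equiv.swap b₁ b₂ (Equiv.swap c₁ c₂ x)) :=
    fun x => rfl
  have sa1 : σ a₁ = a₂ := by
    rw [happ, Equiv.swap_apply_of_ne_of_ne d4 d5, Equiv.swap_apply_of_ne_of_ne d2 d3,
      Equiv.swap_apply_left]
  have sa2 : σ a₂ = a₁ := by
    rw [happ, Equiv.swap_apply_of_ne_of_ne d8 d9, Equiv.swap_apply_of_ne_of_ne d6 d7,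
      Equiv.swap_apply_right]
  have sb1 : σ b₁ = b₂ := by
    rw [happ, Equiv.swap_apply_of_ne_of_ne d11 d12, Equiv.swap_apply_left,
      Equiv.swap_apply_of_ne_of_ne (Ne.symm d3) (Ne.symm d7)]
  have sb2 : σ b₂ = b₁ := by
    rw [happ, Equiv.swap_apply_of_ne_of_ne d13 d14, Equiv.swap_apply_right,
      Equiv.swap_apply_of_ne_of_ne (Ne.symm d2) (Ne.symm d6)]
  have sc1 : σ c₁ = c₂ := by
    rw [happ, Equiv.swap_apply_left, Equiv.swap_apply_of_ne_of_ne (Ne.symm d12) (Ne.symm d14),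
      Equiv.swap_apply_of_ne_of_ne (Ne.symm d5) (Ne.symm d9)]
  have sc2 : σ c₂ = c₁ := by
    rw [happ, Equiv.swap_apply_right, Equiv.swap_apply_of_ne_of_ne (Ne.symm d11) (Ne.symm d13),
      Equiv.swap_apply_of_ne_of_ne (Ne.symm d4) (Ne.symm d8)]
  have sfix : ∀ x, x ≠ a₁ → x ≠ a₂ → x ≠ b₁ → x ≠ b₂ → x ≠ c₁ → x ≠ c₂ → σ x = x := by
    intro x h1 h2 h3 h4 h5 h6
    rw [happ, Equiv.swap_apply_of_ne_of_ne h5 h6, Equiv.swap_apply_of_ne_of_ne h3 h4,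
      Equiv.swap_apply_of_ne_of_ne h1 h2]
  have sinv : ∀ x, σ (σ x) = x := by
    intro x
    by_cases e1 : x = a₁
    · subst e1; rw [sa1, sa2]
    by_cases e2 : x = a₂
    · subst e2; rw [sa2, sa1]
    by_cases e3 : x = b₁
    · subst e3; rw [sb1, sb2]
    by_cases e4 : x = b₂
    · subst e4; rw [sb2, sb1]
    by_cases e5 : x = c₁
    · subst e5; rw [sc1, sc2]
    by_cases e6 : x = c₂
    · subst e6; rw [sc2, sc1]
    · rw [sfix x e1 e2 e3 e4 e5 e6, sfix x e1 e2 e3 e4 e5 e6]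
  have mX : Sym2.map σ s(a₁, b₁) = s(a₂, b₂) := by rw [Sym2.map_pair_eq, sa1, sb1]
  have mY : Sym2.map σ s(a₂, c₁) = s(a₁, c₂) := by rw [Sym2.map_pair_eq, sa2, sc1]
  have mZ : Sym2.map σ s(b₂, c₂) = s(b₁, c₁) := by rw [Sym2.map_pair_eq, sb2, sc2]
  refine ⟨Or.symm hA, Or.symm hB, Or.symm hC, ?_, ?_, ?_, ?_, ?_⟩
  · exact pairwise_six.mpr ⟨Ne.symm d1, d7, d6, d9, d8, d3, d2, d5, d4, Ne.symm d10,
      d14, d13, d12, d11, Ne.symm d15⟩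
  · rw [hE]; exact Finset.mem_image.mpr ⟨s(a₁, b₁), hX, mX⟩
  · rw [hE]; exact Finset.mem_image.mpr ⟨s(a₂, c₁), hY, mY⟩
  · rw [hE]; exact Finset.mem_image.mpr ⟨s(b₂, c₂), hZ, mZ⟩
  · rw [Equiv.swap_comm a₂ a₁, Equiv.swap_comm b₂ b₁, Equiv.swap_comm c₂ c₁, ← hσ, hE,
      Finset.image_image]
    have hid : (Sym2.map σ ∘ Sym2.map σ) = id := by
      funext x
      simp only [Function.comp_apply, Sym2.map_map, id_eq]
      have h2 : (fun x => σ (σ x)) = (id : Fin (2*n) → Fin (2*n)) := funext sinv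
      rw [h2]
      exact congrFun Sym2.map_id x
    rw [hid, Finset.image_id]

lemma strongThird_iff {n : ℕ} {D D' : ChordDiagram n} (hm : StrongThirdMove D D') :
    HasH D ↔ HasH D' := by
  obtain ⟨a₁, a₂, b₁, b₂, c₁, c₂, hmv, hstrong⟩ := hm
  rcases hstrong with hT | hT
  · exact strong_step hmv hT
  · exact (strong_step (tripleMove_symm hmv) hT).symm

/-- Lemma 2: the presence of an H-configuration is invariant
under any finite sequence of first moves and strong third moves, each applied in
either direction (i.e. it is a strong (1,3) homotopy invariant). -/
theorem hasH_iff_of_strong13 (D E : Σ n, ChordDiagram n)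
    (h : Relation.ReflTransGen
      (fun X Y => FirstMoveS X Y ∨ FirstMoveS Y X ∨ StrongThirdS X Y ∨ StrongThirdS Y X)
      D E) :
    HasH D.2 ↔ HasH E.2 := by

  induction h with
  | refl => exact Iff.rfl
  | tail hab hbc ih =>
    refine ih.trans ?_
    rcases hbc with hf | hf | hf | hf
    · obtain ⟨m, A, B, rfl, rfl, hm⟩ := hf
      exact firstMove_iff hm
    · obtain ⟨m, A, B, rfl, rfl, hm⟩ := hf
      exact (firstMove_iff hm).symm
    · obtain ⟨m, A, B, rfl, rfl, hm⟩ := hf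
      exact strongThird_iff hm
    · obtain ⟨m, A, B, rfl, rfl, hm⟩ := hf
      exact (strongThird_iff hm).symm
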